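/- arXiv:2206.15292 — 4 statements merged into one kernel-verified Lean document; each statement's English description precedes it below -/
import Mathlib

section
/- Let P and Q be orthogonal projections on a (finite-dimensional complex inner product) Hilbert space H, and let s be the largest singular value of PQ that is strictly less than 1 (set s = 0 if all singular values of PQ equal 1). Then for every vector ψ in H, ‖P(1−Q)ψ‖ ≤ ‖Pψ‖ + s·‖Qψ‖. -/
noncomputable abbrev Op (n : ℕ) :=
  EuclideanSpace ℂ (Fin n) →L[ℂ] EuclideanSpace ℂ (Fin n)

/-- The set of singular values of `T` that are strictly less than 1. -/
def smallSingularValues {n : ℕ} (T : Op n) : Set ℝ :=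
  {σ : ℝ | 0 ≤ σ ∧ σ < 1 ∧
    ∃ ψ : EuclideanSpace ℂ (Fin n), ψ ≠ 0 ∧
      (T * ContinuousLinearMap.adjoint T) ψ = ((σ : ℂ) ^ 2) • ψ}

/-!
Let `p`, `q`, `e` be the orthogonal projections onto `U`, `W` and `M = U ⊓ W`. Since `e` is absorbed
by `p` and `q` on either side, `p (1 - q) ψ = (1 - e) (p ψ) - p w` with `w = (1 - e) (q ψ) ∈ W ⊓ Mᗮ`
and `‖w‖ ≤ ‖q ψ‖`. For such `w`, `‖p w‖² = re ⟪(q p q - e) w, w⟫`, so it suffices to bound the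
eigenvalues of `q p q - e` by `s²`. An eigenvector `v` for a positive eigenvalue `μ` has `e v = 0`
and `q p q v = μ v`; hence `μ ≠ 1` (otherwise `v ∈ M`), and `p v` is an eigenvector of
`(p q) (p q)†` for `μ`, so `√μ` is a singular value of `p q` below `1`.
-/

open Module.End ContinuousLinearMap

theorem LinearMap.IsSymmetric.re_inner_le_of_forall_hasEigenvalue_le
    {𝕜 H : Type*} [RCLike 𝕜] [NormedAddCommGroup H] [InnerProductSpace 𝕜 H]
    [FiniteDimensional 𝕜 H] {T : H →ₗ[𝕜] H} (hT : T.IsSymmetric) {c : ℝ}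
    (hc : ∀ μ : ℝ, HasEigenvalue T μ → μ ≤ c) (x : H) :
    RCLike.re (inner 𝕜 (T x) x) ≤ c * ‖x‖ ^ 2 := by
  rcases eq_or_ne x 0 with rfl | hx
  · simp
  have : Nontrivial H := ⟨⟨x, 0, hx⟩⟩
  have hbdd : BddAbove (Set.range fun y : {y : H // y ≠ 0} ↦
      RCLike.re (inner 𝕜 (T y) y) / ‖(y : H)‖ ^ 2) :=
    ⟨‖T.toContinuousLinearMap‖, by
      rintro _ ⟨y, rfl⟩
      exact (le_abs_self _).trans (T.toContinuousLinearMap.rayleighQuotient_le_norm y)⟩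
  have hle := (le_ciSup hbdd ⟨x, hx⟩).trans (hc _ hT.hasEigenvalue_iSup_of_finiteDimensional)
  rwa [div_le_iff₀ (by positivity)] at hle

namespace Submodule

variable {𝕜 H : Type*} [RCLike 𝕜] [NormedAddCommGroup H] [InnerProductSpace 𝕜 H]

theorem starProjection_starProjection_of_le {K U : Submodule 𝕜 H} [K.HasOrthogonalProjection]
    [U.HasOrthogonalProjection] (h : K ≤ U) (x : H) :
    U.starProjection (K.starProjection x) = K.starProjection x :=
  starProjection_eq_self_iff.mpr (h (K.starProjection_apply_mem x))

theorem starProjection_starProjection_of_le' {K U : Submodule 𝕜 H} [K.HasOrthogonalProjection]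
    [U.HasOrthogonalProjection] (h : K ≤ U) (x : H) :
    K.starProjection (U.starProjection x) = K.starProjection x :=
  congr($(starProjection_comp_starProjection_of_le h) x)

section

variable {U W : Submodule 𝕜 H} [U.HasOrthogonalProjection] [W.HasOrthogonalProjection]

theorem mem_inf_of_starProjection_starProjection_eq_self {v : H}
    (h : U.starProjection (W.starProjection v) = v) : v ∈ U ⊓ W := by
  refine ⟨h ▸ U.starProjection_apply_mem _,
    (W.mem_iff_norm_starProjection v).mpr (le_antisymm (W.norm_starProjection_apply_le v) ?_)⟩
  calc ‖v‖ = ‖U.starProjection (W.starProjection v)‖ := by rw [h]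
    _ ≤ ‖W.starProjection v‖ := U.norm_starProjection_apply_le _

theorem mem_inf_of_starProjection_starProjection_starProjection_eq_self {v : H}
    (h : W.starProjection (U.starProjection (W.starProjection v)) = v) : v ∈ U ⊓ W := by
  have hvW : v ∈ W := h ▸ W.starProjection_apply_mem _
  rw [starProjection_eq_self_iff.mpr hvW] at h
  exact inf_comm W U ▸ mem_inf_of_starProjection_starProjection_eq_self h

theorem le_one_of_starProjection_starProjection_starProjection_eq_smul {μ : ℝ} {v : H}
    (hv : v ≠ 0) (h : W.starProjection (U.starProjection (W.starProjection v)) = (μ : 𝕜) • v) :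
    μ ≤ 1 := by
  have hnorm : |μ| * ‖v‖ ≤ 1 * ‖v‖ := calc
    |μ| * ‖v‖ = ‖W.starProjection (U.starProjection (W.starProjection v))‖ := by
      rw [h, norm_smul, RCLike.norm_ofReal]
    _ ≤ ‖v‖ := ((W.norm_starProjection_apply_le _).trans
      (U.norm_starProjection_apply_le _)).trans (W.norm_starProjection_apply_le _)
    _ = 1 * ‖v‖ := (one_mul _).symm
  exact (le_abs_self μ).trans (le_of_mul_le_mul_right hnorm (norm_pos_iff.mpr hv))

theorem exists_mul_adjoint_apply_eq_smul_of_eq_smul [CompleteSpace H] {μ : 𝕜} (hμ : μ ≠ 0)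
    {v : H} (hv : v ≠ 0) (h : W.starProjection (U.starProjection (W.starProjection v)) = μ • v) :
    ∃ u ≠ 0, (U.starProjection * W.starProjection * adjoint (U.starProjection * W.starProjection))
      u = μ • u := by
  have hvW : v ∈ W := by
    rw [← inv_smul_smul₀ hμ v, ← h]
    exact W.smul_mem _ (W.starProjection_apply_mem _)
  rw [starProjection_eq_self_iff.mpr hvW] at h
  refine ⟨U.starProjection v, fun hu ↦ hv ?_, ?_⟩
  · rw [hu, map_zero] at h
    exact (smul_eq_zero.mp h.symm).resolve_left hμ
  · rw [← star_eq_adjoint, star_mul, (isSelfAdjoint_starProjection U).star_eq,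
      (isSelfAdjoint_starProjection W).star_eq]
    simp only [mul_apply_eq_comp, starProjection_starProjection_of_le le_rfl, h, map_smul,
      starProjection_eq_self_iff.mpr hvW]

end

variable (U W : Submodule 𝕜 H) [W.HasOrthogonalProjection] [(U ⊓ W).HasOrthogonalProjection]

theorem starProjection_orthogonal_inf_starProjection_mem (ψ : H) :
    (U ⊓ W)ᗮ.starProjection (W.starProjection ψ) ∈ W := by
  rw [starProjection_orthogonal_val]
  exact W.sub_mem (W.starProjection_apply_mem ψ)
    (inf_le_right (a := U) ((U ⊓ W).starProjection_apply_mem _))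

variable [U.HasOrthogonalProjection]

theorem starProjection_sub_starProjection_eq (ψ : H) :
    U.starProjection (ψ - W.starProjection ψ) =
      (U ⊓ W)ᗮ.starProjection (U.starProjection ψ) -
        U.starProjection ((U ⊓ W)ᗮ.starProjection (W.starProjection ψ)) := by
  simp only [starProjection_orthogonal_val, map_sub,
    starProjection_starProjection_of_le' inf_le_left,
    starProjection_starProjection_of_le' inf_le_right,
    starProjection_starProjection_of_le inf_le_left]
  abel

theorem starProjection_inf_apply_eq_zero_of_apply_eq_smul {μ : 𝕜} (hμ : μ ≠ 0) {v : H}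
    (hv : (W.starProjection * U.starProjection * W.starProjection - (U ⊓ W).starProjection) v
      = μ • v) :
    (U ⊓ W).starProjection v = 0 := by
  have h := congr((U ⊓ W).starProjection $hv)
  simp only [sub_apply, mul_apply_eq_comp, map_sub, map_smul,
    starProjection_starProjection_of_le' inf_le_left,
    starProjection_starProjection_of_le' inf_le_right,
    starProjection_starProjection_of_le le_rfl, sub_self] at h
  exact (smul_eq_zero.mp h.symm).resolve_left hμ

variable [CompleteSpace H] {s : ℝ}
  (hsv : ∀ σ : ℝ, 0 ≤ σ → σ < 1 →
    (∃ u ≠ 0, (U.starProjection * W.starProjection *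
      adjoint (U.starProjection * W.starProjection)) u = ((σ : 𝕜) ^ 2) • u) → σ ≤ s)
include hsv

theorem le_sq_of_hasEigenvalue {μ : ℝ}
    (hμ : HasEigenvalue ((W.starProjection * U.starProjection * W.starProjection -
      (U ⊓ W).starProjection : H →L[𝕜] H) : H →ₗ[𝕜] H) (μ : 𝕜)) :
    μ ≤ s ^ 2 := by
  rcases le_or_gt μ 0 with hμ0 | hμ0
  · exact hμ0.trans (sq_nonneg s)
  obtain ⟨v, hv⟩ := hμ.exists_hasEigenvector
  have hμ' : (μ : 𝕜) ≠ 0 := RCLike.ofReal_ne_zero.mpr hμ0.ne'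
  have hEv := starProjection_inf_apply_eq_zero_of_apply_eq_smul U W hμ' hv.apply_eq_smul
  have hQPQ : W.starProjection (U.starProjection (W.starProjection v)) = (μ : 𝕜) • v := by
    simpa [hEv] using hv.apply_eq_smul
  have hμ1 : μ < 1 := by
    refine (le_one_of_starProjection_starProjection_starProjection_eq_smul hv.2 hQPQ).lt_of_ne ?_
    rintro rfl
    have hvM := mem_inf_of_starProjection_starProjection_starProjection_eq_self
      (by simpa using hQPQ)
    exact hv.2 (by rw [← starProjection_eq_self_iff.mpr hvM, hEv])
  have hσ : √μ ≤ s := hsv (√μ) (Real.sqrt_nonneg μ) ((Real.sqrt_lt' one_pos).mpr (by rwa [one_pow]))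
    (by
      rw [← RCLike.ofReal_pow, Real.sq_sqrt hμ0.le]
      exact exists_mul_adjoint_apply_eq_smul_of_eq_smul hμ' hv.2 hQPQ)
  calc μ = √μ ^ 2 := (Real.sq_sqrt hμ0.le).symm
    _ ≤ s ^ 2 := pow_le_pow_left₀ (Real.sqrt_nonneg μ) hσ 2

variable [FiniteDimensional 𝕜 H] (hs : 0 ≤ s)
include hs

theorem norm_starProjection_apply_le_of_mem_orthogonal_inf {w : H} (hwW : w ∈ W)
    (hwM : w ∈ (U ⊓ W)ᗮ) : ‖U.starProjection w‖ ≤ s * ‖w‖ := by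
  set B := W.starProjection * U.starProjection * W.starProjection - (U ⊓ W).starProjection
  have hB : (B : H →ₗ[𝕜] H).IsSymmetric :=
    (((isSelfAdjoint_starProjection U).conjugate_self (isSelfAdjoint_starProjection W)).sub
      (isSelfAdjoint_starProjection _)).isSymmetric
  have hBw : RCLike.re (inner 𝕜 (B w) w) = ‖U.starProjection w‖ ^ 2 := by
    rw [sub_apply, mul_apply_eq_comp, mul_apply_eq_comp, starProjection_eq_self_iff.mpr hwW,
      ((U ⊓ W).starProjection_apply_eq_zero_iff).mpr hwM, sub_zero,
      inner_starProjection_left_eq_right, starProjection_eq_self_iff.mpr hwW]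
    exact U.re_inner_starProjection_eq_normSq w
  have hquad := hB.re_inner_le_of_forall_hasEigenvalue_le (fun _ ↦ le_sq_of_hasEigenvalue U W hsv) w
  rw [coe_coe, hBw, ← mul_pow] at hquad
  exact (pow_le_pow_iff_left₀ (norm_nonneg _) (by positivity) two_ne_zero).mp hquad

theorem norm_starProjection_sub_starProjection_le (ψ : H) :
    ‖U.starProjection (ψ - W.starProjection ψ)‖ ≤
      ‖U.starProjection ψ‖ + s * ‖W.starProjection ψ‖ := by
  rw [starProjection_sub_starProjection_eq]
  refine (norm_sub_le _ _).trans (add_le_add (norm_starProjection_apply_le _ _) ?_)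
  calc _ ≤ s * ‖(U ⊓ W)ᗮ.starProjection (W.starProjection ψ)‖ :=
        norm_starProjection_apply_le_of_mem_orthogonal_inf U W hsv hs
          (starProjection_orthogonal_inf_starProjection_mem U W ψ)
          (starProjection_apply_mem _ _)
    _ ≤ s * ‖W.starProjection ψ‖ := by gcongr; exact norm_starProjection_apply_le _ _

end Submodule

theorem stmt_0 {n : ℕ} (P Q : Op n)
    (hP : IsSelfAdjoint P) (hP2 : P * P = P)
    (hQ : IsSelfAdjoint Q) (hQ2 : Q * Q = Q)
    (s : ℝ) (hs : s = sSup (insert 0 (smallSingularValues (P * Q)))) :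
    ∀ ψ : EuclideanSpace ℂ (Fin n),
      ‖(P * (1 - Q)) ψ‖ ≤ ‖P ψ‖ + s * ‖Q ψ‖ := by
  intro ψ
  obtain ⟨U, _, rfl⟩ := isStarProjection_iff_eq_starProjection.mp ⟨hP2, hP⟩
  obtain ⟨W, _, rfl⟩ := isStarProjection_iff_eq_starProjection.mp ⟨hQ2, hQ⟩
  have hbdd : BddAbove (insert 0 (smallSingularValues (U.starProjection * W.starProjection))) :=
    ⟨1, by rintro σ (rfl | hσ); exacts [zero_le_one, hσ.2.1.le]⟩
  rw [mul_sub, mul_one, sub_apply, mul_apply_eq_comp, ← map_sub]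
  exact U.norm_starProjection_sub_starProjection_le W
    (fun σ hσ0 hσ1 hσ ↦ hs ▸ le_csSup hbdd (Set.mem_insert_of_mem _ ⟨hσ0, hσ1, hσ⟩))
    (hs ▸ le_csSup hbdd (Set.mem_insert 0 _)) ψ
end

section
/- Let P₁, …, P_m be orthogonal projections on a finite-dimensional complex Hilbert space and set O = (1/m)·∑_{j=1}^m P_j. Then 1 − ‖O‖ ≥ (1 − ‖P₁P₂⋯P_m‖) / (m·(1 + ‖P₁P₂⋯P_m‖)), where ‖·‖ denotes the operator norm. -/
/-!
For a vector `x`, write `y = ∑ⱼ ‖x - Pⱼ x‖²`, so that `re ⟪O x, x⟫ = ‖x‖² - y / m`. The quantum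
union bound, proved by induction on the number of projections with one Cauchy–Schwarz step per
factor, gives `‖x‖ (‖x‖ - ‖Π x‖) ≤ √y · √(‖x‖² - ‖Π x‖²)` for `Π = P₁ ⋯ Pₘ`; as
`‖Π x‖ ≤ ‖Π‖ ‖x‖`, this yields `(1 - ‖Π‖) ‖x‖² ≤ (1 + ‖Π‖) y`. Since `O` is self-adjoint and positive, `‖O‖` is the
supremum of `re ⟪O x, x⟫ / ‖x‖²`, which is therefore at most `1 - (1 - ‖Π‖) / (m (1 + ‖Π‖))`.
-/

open RCLike ContinuousLinearMap

lemma Real.sqrt_mul_sqrt_add_sqrt_mul_sqrt_le {a b c d : ℝ} (ha : 0 ≤ a) (hb : 0 ≤ b)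
    (hc : 0 ≤ c) (hd : 0 ≤ d) : √a * √b + √c * √d ≤ √(a + c) * √(b + d) := by
  simpa [Fin.sum_univ_two] using Real.sum_sqrt_mul_sqrt_le Finset.univ (f := ![a, c])
    (g := ![b, d]) (by simp [Fin.forall_fin_two, *]) (by simp [Fin.forall_fin_two, *])

lemma one_sub_mul_sq_le_of_sq_mul_sub_sq_le {a r s y : ℝ} (ha : 0 ≤ a) (hr : 0 ≤ r)
    (hsa : s ≤ a * r) (hy : 0 ≤ y) (h : (r * (r - s)) ^ 2 ≤ y * (r ^ 2 - s ^ 2)) :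
    (1 - a) * r ^ 2 ≤ (1 + a) * y := by
  rcases le_or_gt 1 a with ha1 | ha1
  · nlinarith
  rcases hr.eq_or_lt with rfl | hr
  · nlinarith
  have hsr : s < r := by nlinarith
  have h' : r ^ 2 * (r - s) ≤ y * (r + s) := by
    have : (r - s) * (r ^ 2 * (r - s)) ≤ (r - s) * (y * (r + s)) := by nlinarith
    exact le_of_mul_le_mul_left this (by linarith)
  have : r * ((1 - a) * r ^ 2) ≤ r * ((1 + a) * y) := by nlinarith
  exact le_of_mul_le_mul_left this hr

variable {𝕜 E : Type*} [RCLike 𝕜] [NormedAddCommGroup E] [InnerProductSpace 𝕜 E]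

local notation "⟪" x ", " y "⟫" => inner 𝕜 x y

lemma ContinuousLinearMap.norm_le_of_abs_re_inner_le {T : E →L[𝕜] E}
    (hT : (T : E →ₗ[𝕜] E).IsSymmetric) {c : ℝ} (hc : 0 ≤ c)
    (h : ∀ x, |re ⟪T x, x⟫| ≤ c * ‖x‖ ^ 2) : ‖T‖ ≤ c := by
  rw [T.norm_eq_iSup_rayleighQuotient hT]
  refine ciSup_le fun x => ?_
  rcases eq_or_ne x 0 with rfl | hx
  · simpa using hc
  · rw [rayleighQuotient, reApplyInnerSelf_apply, abs_div, abs_sq,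
      div_le_iff₀ (by positivity)]
    exact h x

namespace IsStarProjection

variable [CompleteSpace E] {p : E →L[𝕜] E}

lemma inner_apply_left (hp : IsStarProjection p) (x y : E) : ⟪p x, y⟫ = ⟪x, p y⟫ :=
  hp.isSelfAdjoint.isSymmetric x y

lemma apply_apply (hp : IsStarProjection p) (x : E) : p (p x) = p x :=
  DFunLike.congr_fun hp.isIdempotentElem.eq x

lemma inner_apply_sub_apply (hp : IsStarProjection p) (x y : E) : ⟪p x, y - p y⟫ = 0 := by
  rw [inner_sub_right, hp.inner_apply_left, hp.inner_apply_left x (p y), hp.apply_apply, sub_self]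

lemma norm_apply_sq (hp : IsStarProjection p) (x : E) : ‖p x‖ ^ 2 = re ⟪x, p x⟫ := by
  rw [← inner_self_eq_norm_sq (𝕜 := 𝕜), hp.inner_apply_left, hp.apply_apply]

lemma norm_sub_apply_sq (hp : IsStarProjection p) (x : E) :
    ‖x - p x‖ ^ 2 = ‖x‖ ^ 2 - ‖p x‖ ^ 2 := by
  rw [norm_sub_sq (𝕜 := 𝕜), ← hp.norm_apply_sq]
  ring

lemma norm_apply_le (hp : IsStarProjection p) (x : E) : ‖p x‖ ≤ ‖x‖ := by
  have := hp.norm_sub_apply_sq x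
  nlinarith [sq_nonneg ‖x - p x‖, norm_nonneg x, norm_nonneg (p x)]

lemma re_inner_sub_apply_le (hp : IsStarProjection p) (x y : E) :
    re ⟪x, y - p y⟫ ≤ ‖x - p x‖ * ‖y - p y‖ := by
  calc re ⟪x, y - p y⟫ = re ⟪x - p x, y - p y⟫ := by
        rw [inner_sub_left, hp.inner_apply_sub_apply, sub_zero]
    _ ≤ ‖x - p x‖ * ‖y - p y‖ := re_inner_le_norm _ _

end IsStarProjection

lemma sum_map_norm_sub_apply_sq_nonneg (L : List (E →L[𝕜] E)) (x : E) :
    0 ≤ (L.map fun p => ‖x - p x‖ ^ 2).sum :=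
  List.sum_nonneg fun _ h => by
    obtain ⟨p, -, rfl⟩ := List.mem_map.1 h
    positivity

variable [CompleteSpace E]

lemma norm_list_prod_apply_le {L : List (E →L[𝕜] E)} (hL : ∀ p ∈ L, IsStarProjection p)
    (x : E) : ‖L.prod x‖ ≤ ‖x‖ := by
  induction L with
  | nil => simp
  | cons p L ih =>
    simp only [List.forall_mem_cons] at hL
    exact (hL.1.norm_apply_le _).trans (ih hL.2)

/-- The quantum union bound. -/
theorem re_inner_sub_list_prod_apply_le {L : List (E →L[𝕜] E)}
    (hL : ∀ p ∈ L, IsStarProjection p) (x : E) :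
    re ⟪x, x - L.prod x⟫ ≤
      √(L.map fun p => ‖x - p x‖ ^ 2).sum * √(‖x‖ ^ 2 - ‖L.prod x‖ ^ 2) := by
  induction L with
  | nil => simp
  | cons p L ih =>
    simp only [List.forall_mem_cons] at hL
    obtain ⟨hp, hL⟩ := hL
    set v := L.prod x
    have hv : ‖v‖ ≤ ‖x‖ := norm_list_prod_apply_le hL x
    have hprod : (p :: L).prod x = p v := rfl
    calc re ⟪x, x - (p :: L).prod x⟫ = re ⟪x, v - p v⟫ + re ⟪x, x - v⟫ := by
          rw [hprod, ← map_add, ← inner_add_right, sub_add_sub_cancel']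
      _ ≤ ‖x - p x‖ * ‖v - p v‖ +
          √(L.map fun p => ‖x - p x‖ ^ 2).sum * √(‖x‖ ^ 2 - ‖v‖ ^ 2) :=
        add_le_add (hp.re_inner_sub_apply_le x v) (ih hL)
      _ = √(‖x - p x‖ ^ 2) * √(‖v‖ ^ 2 - ‖p v‖ ^ 2) +
          √(L.map fun p => ‖x - p x‖ ^ 2).sum * √(‖x‖ ^ 2 - ‖v‖ ^ 2) := by
        rw [← hp.norm_sub_apply_sq, Real.sqrt_sq (norm_nonneg _), Real.sqrt_sq (norm_nonneg _)]
      _ ≤ _ := by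
        have hpv := hp.norm_apply_le v
        refine (Real.sqrt_mul_sqrt_add_sqrt_mul_sqrt_le (by positivity)
          (by nlinarith [norm_nonneg (p v)]) (sum_map_norm_sub_apply_sq_nonneg L x)
          (by nlinarith [norm_nonneg v])).trans_eq ?_
        rw [hprod, List.map_cons, List.sum_cons, sub_add_sub_cancel']

theorem one_sub_norm_list_prod_mul_norm_sq_le {L : List (E →L[𝕜] E)}
    (hL : ∀ p ∈ L, IsStarProjection p) (x : E) :
    (1 - ‖L.prod‖) * ‖x‖ ^ 2 ≤ (1 + ‖L.prod‖) * (L.map fun p => ‖x - p x‖ ^ 2).sum := by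
  have hy := sum_map_norm_sub_apply_sq_nonneg L x
  refine one_sub_mul_sq_le_of_sq_mul_sub_sq_le (norm_nonneg _) (norm_nonneg x)
    (L.prod.le_opNorm x) hy ?_
  have hlower : ‖x‖ * (‖x‖ - ‖L.prod x‖) ≤ re ⟪x, x - L.prod x⟫ := by
    rw [inner_sub_right, map_sub, inner_self_eq_norm_sq (𝕜 := 𝕜)]
    nlinarith [re_inner_le_norm (𝕜 := 𝕜) x (L.prod x)]
  have hcontr := norm_list_prod_apply_le hL x
  calc (‖x‖ * (‖x‖ - ‖L.prod x‖)) ^ 2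
      ≤ (√(L.map fun p => ‖x - p x‖ ^ 2).sum * √(‖x‖ ^ 2 - ‖L.prod x‖ ^ 2)) ^ 2 := by
        refine pow_le_pow_left₀ (mul_nonneg (norm_nonneg x) (sub_nonneg.2 hcontr)) ?_ 2
        exact hlower.trans (re_inner_sub_list_prod_apply_le hL x)
    _ = _ := by
        rw [mul_pow, Real.sq_sqrt hy, Real.sq_sqrt (by nlinarith [norm_nonneg (L.prod x)])]

lemma re_inner_natCast_inv_smul_sum_apply {ι : Type*} {P : ι → E →L[𝕜] E}
    (hP : ∀ j, IsStarProjection (P j)) (m : ℕ) (s : Finset ι) (x : E) :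
    re ⟪((m : 𝕜)⁻¹ • ∑ j ∈ s, P j) x, x⟫ = (m : ℝ)⁻¹ * ∑ j ∈ s, ‖P j x‖ ^ 2 := by
  simp_rw [smul_apply, sum_apply, inner_smul_left, sum_inner, map_inv₀, map_natCast]
  rw [← ofReal_natCast, ← ofReal_inv, re_ofReal_mul, map_sum]
  simp_rw [(hP _).inner_apply_left _ x, ← (hP _).norm_apply_sq]

theorem re_inner_inv_smul_sum_apply_le {m : ℕ} (hm : 0 < m) {P : Fin m → E →L[𝕜] E}
    (hP : ∀ j, IsStarProjection (P j)) (x : E) :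
    re ⟪((m : 𝕜)⁻¹ • ∑ j, P j) x, x⟫ ≤
      (1 - (1 - ‖(List.ofFn P).prod‖) / (m * (1 + ‖(List.ofFn P).prod‖))) * ‖x‖ ^ 2 := by
  have hunion := one_sub_norm_list_prod_mul_norm_sq_le (L := List.ofFn P)
    (by simpa [List.mem_ofFn] using hP) x
  simp only [List.map_ofFn, List.sum_ofFn, Function.comp_apply, (hP _).norm_sub_apply_sq,
    Finset.sum_sub_distrib, Finset.sum_const, Finset.card_univ, Fintype.card_fin,
    nsmul_eq_mul] at hunion
  have h1a : 0 < 1 + ‖(List.ofFn P).prod‖ := by positivity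
  rw [re_inner_natCast_inv_smul_sum_apply hP, inv_mul_le_iff₀ (by positivity),
    show ∀ a : ℝ, (m : ℝ) * ((1 - (1 - a) / (m * (1 + a))) * ‖x‖ ^ 2)
      = m * ‖x‖ ^ 2 - (1 - a) * ‖x‖ ^ 2 / (1 + a) by intro a; field_simp,
    le_sub_comm, div_le_iff₀ h1a]
  linarith

theorem stmt_1 {n m : ℕ} (hm : 1 ≤ m) (P : Fin m → Op n)
    (hsa : ∀ j, IsSelfAdjoint (P j)) (hproj : ∀ j, P j * P j = P j) :
    1 - ‖(((m : ℂ)⁻¹ • ∑ j, P j : Op n))‖ ≥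
      (1 - ‖(List.ofFn P).prod‖) / (m * (1 + ‖(List.ofFn P).prod‖)) := by
  have hP (j : Fin m) : IsStarProjection (P j) := ⟨hproj j, hsa j⟩
  have hsum : IsSelfAdjoint (∑ j, P j) := isSelfAdjoint_sum (R := Op n) _ fun j _ => hsa j
  have hO : IsSelfAdjoint ((m : ℂ)⁻¹ • ∑ j, P j : Op n) := (IsSelfAdjoint.natCast m).inv₀.smul hsum
  have hm' : (1 : ℝ) ≤ m := by exact_mod_cast hm
  have ha : 0 ≤ ‖(List.ofFn P).prod‖ := norm_nonneg _
  rw [ge_iff_le, le_sub_comm]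
  refine norm_le_of_abs_re_inner_le hO.isSymmetric ?_ fun x => ?_
  · exact sub_nonneg.2 (div_le_one_of_le₀ (by nlinarith) (by positivity))
  · rw [abs_of_nonneg (by rw [re_inner_natCast_inv_smul_sum_apply hP]; positivity)]
    exact re_inner_inv_smul_sum_apply_le hm hP x
end

section
/- Let Q be an orthogonal projection and Ω a Hermitian operator with Q ≤ Ω ≤ 1 and ΩQ = Q on a finite-dimensional complex Hilbert space. Set β = ‖(1−Q)Ω(1−Q)‖ and ν = 1 − β. Then for every density operator σ with tr(Qσ) ≤ 1 − ε, one has tr(Ωσ) ≤ 1 − νε. -/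
noncomputable def trOp {n : ℕ} (A : Op n) : ℂ :=
  LinearMap.trace ℂ (EuclideanSpace ℂ (Fin n)) A.toLinearMap

open scoped ComplexOrder

section CStarAlgebra

variable {A : Type*} [CStarAlgebra A] [PartialOrder A] [StarOrderedRing A] {p ω : A}

lemma IsStarProjection.mul_eq_of_le_of_le_one (hp : IsStarProjection p) (hpω : p ≤ ω)
    (hω : ω ≤ 1) : ω * p = p ∧ p * ω = p := by
  obtain ⟨h₁, h₂⟩ := hp.one_sub.mul_right_and_mul_left_of_nonneg_of_le (sub_nonneg.2 hω)
    (sub_le_sub_left hpω 1)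
  exact ⟨sub_eq_zero.1 (by rw [← sub_eq_zero.2 h₁]; noncomm_ring),
    sub_eq_zero.1 (by rw [← sub_eq_zero.2 h₂]; noncomm_ring)⟩

lemma IsStarProjection.conjugate_one_sub_eq_sub (hp : IsStarProjection p) (hpω : p ≤ ω)
    (hω : ω ≤ 1) : (1 - p) * ω * (1 - p) = ω - p := by
  obtain ⟨hωp, hpω'⟩ := hp.mul_eq_of_le_of_le_one hpω hω
  have hpp : p * p = p := hp.isIdempotentElem
  calc (1 - p) * ω * (1 - p) = ω - ω * p - p * ω + p * ω * p := by noncomm_ring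
    _ = ω - p := by rw [hωp, hpω', hpp]; abel

lemma IsStarProjection.le_algebraMap_norm_mul {a : A} (hp : IsStarProjection p)
    (ha : IsSelfAdjoint a) (hpa : p * a * p = a) : a ≤ algebraMap ℝ A ‖a‖ * p := by
  have h := star_left_conjugate_le_conjugate ha.le_algebraMap_norm_self p
  rwa [hp.isSelfAdjoint.star_eq, hpa, ← Algebra.commutes, mul_assoc,
    hp.isIdempotentElem.eq] at h

lemma IsStarProjection.norm_conjugate_one_sub_le_one (hp : IsStarProjection p) (hpω : p ≤ ω)
    (hω : ω ≤ 1) : ‖(1 - p) * ω * (1 - p)‖ ≤ 1 := by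
  rw [hp.conjugate_one_sub_eq_sub hpω hω]
  exact (CStarAlgebra.norm_le_one_iff_of_nonneg _ (sub_nonneg.2 hpω)).2
    ((sub_le_self _ hp.nonneg).trans hω)

theorem IsStarProjection.map_le_of_le_of_le_one (φ : A →ₚ[ℂ] ℂ) (hφ : φ 1 = 1)
    (hp : IsStarProjection p) (hpω : p ≤ ω) (hω : ω ≤ 1) :
    φ ω ≤ φ p + ‖(1 - p) * ω * (1 - p)‖ * (1 - φ p) := by
  set a := (1 - p) * ω * (1 - p) with ha_def
  have ha_eq : a = ω - p := hp.conjugate_one_sub_eq_sub hpω hω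
  have hωa : ω = p + a := by rw [ha_eq]; abel
  have ha : IsSelfAdjoint a := ha_eq ▸ (sub_nonneg.2 hpω).isSelfAdjoint
  have hpa : (1 - p) * a * (1 - p) = a := by
    rw [ha_def, ← mul_assoc, ← mul_assoc, hp.one_sub.isIdempotentElem.eq, mul_assoc _ (1 - p),
      hp.one_sub.isIdempotentElem.eq]
  have hφa : φ a ≤ ‖a‖ * (1 - φ p) := by
    calc φ a ≤ φ (algebraMap ℝ A ‖a‖ * (1 - p)) :=
          OrderHomClass.mono φ (hp.one_sub.le_algebraMap_norm_mul ha hpa)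
      _ = ‖a‖ * (1 - φ p) := by
          rw [← Algebra.smul_def, ← Complex.coe_smul, map_smul, map_sub, hφ, smul_eq_mul]
  calc φ ω = φ p + φ a := by rw [hωa, map_add]
    _ ≤ φ p + ‖a‖ * (1 - φ p) := add_le_add_right hφa _

end CStarAlgebra

namespace ContinuousLinearMap

variable {E : Type*} [NormedAddCommGroup E] [InnerProductSpace ℂ E] [FiniteDimensional ℂ E]

lemma trace_mul_nonneg {a b : E →L[ℂ] E} (ha : 0 ≤ a) (hb : 0 ≤ b) :
    0 ≤ LinearMap.trace ℂ E (a * b : E →L[ℂ] E) := by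
  obtain ⟨s, rfl⟩ := CStarAlgebra.nonneg_iff_eq_star_mul_self.1 hb
  have hsas : (0 : E →L[ℂ] E) ≤ s * a * star s := star_right_conjugate_nonneg ha s
  calc (0 : ℂ) ≤ LinearMap.trace ℂ E (s * a * star s : E →L[ℂ] E) :=
        ((nonneg_iff_isPositive _).1 hsas).toLinearMap.trace_nonneg
    _ = LinearMap.trace ℂ E (a * (star s * s) : E →L[ℂ] E) := by
        simp only [toLinearMap_mul, mul_assoc, LinearMap.trace_mul_cycle' ℂ (a : E →ₗ[ℂ] E)]

noncomputable def traceMulRightPositiveLinearMap (σ : E →L[ℂ] E) (hσ : 0 ≤ σ) :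
    (E →L[ℂ] E) →ₚ[ℂ] ℂ :=
  .mk₀ (LinearMap.trace ℂ E ∘ₗ coeLM ℂ ∘ₗ LinearMap.mulRight ℂ σ) fun _ ha ↦ trace_mul_nonneg ha hσ

end ContinuousLinearMap

open ContinuousLinearMap in
theorem stmt_8_general {n : ℕ} (Q Ω : Op n)
    (hQsa : IsSelfAdjoint Q) (hQ2 : Q * Q = Q)
    (hQleΩ : (Ω - Q).IsPositive) (hΩle1 : (1 - Ω).IsPositive)
    (β ν : ℝ) (hβ : β = ‖(1 - Q) * Ω * (1 - Q)‖) (hν : ν = 1 - β)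
    (ε : ℝ) :
    ∀ σ : Op n, σ.IsPositive → trOp σ = 1 →
      (trOp (Q * σ)).re ≤ 1 - ε → (trOp (Ω * σ)).re ≤ 1 - ν * ε := by
  intro σ hσ htr hQσ
  have hQ : IsStarProjection Q := ⟨hQ2, hQsa⟩
  have hQΩ : Q ≤ Ω := (le_def Q Ω).2 hQleΩ
  have hΩ1 : Ω ≤ 1 := (le_def Ω 1).2 hΩle1
  set φ := traceMulRightPositiveLinearMap σ ((nonneg_iff_isPositive σ).2 hσ)
  have hφ : ∀ A, φ A = trOp (A * σ) := fun _ ↦ rfl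
  have hφ1 : φ 1 = 1 := by rw [hφ, one_mul, htr]
  have hΩσ := (Complex.le_def.1 (hQ.map_le_of_le_of_le_one φ hφ1 hQΩ hΩ1)).1
  have hβ1 : β ≤ 1 := hβ ▸ hQ.norm_conjugate_one_sub_le_one hQΩ hΩ1
  simp only [hφ, ← hβ, Complex.add_re, Complex.re_ofReal_mul, Complex.sub_re,
    Complex.one_re] at hΩσ
  rw [hν]
  nlinarith [mul_nonneg (sub_nonneg.2 hβ1) (sub_nonneg.2 hQσ)]

theorem stmt_8 {n : ℕ} (Q Ω : Op n)
    (hQsa : IsSelfAdjoint Q) (hQ2 : Q * Q = Q)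
    (hΩsa : IsSelfAdjoint Ω)
    (hQleΩ : (Ω - Q).IsPositive) (hΩle1 : (1 - Ω).IsPositive)
    (hΩQ : Ω * Q = Q)
    (β ν : ℝ) (hβ : β = ‖(1 - Q) * Ω * (1 - Q)‖) (hν : ν = 1 - β)
    (ε : ℝ) (hε0 : 0 < ε) (hε1 : ε < 1) :
    ∀ σ : Op n, σ.IsPositive → trOp σ = 1 →
      (trOp (Q * σ)).re ≤ 1 - ε → (trOp (Ω * σ)).re ≤ 1 - ν * ε :=
  stmt_8_general Q Ω hQsa hQ2 hQleΩ hΩle1 β ν hβ hν ε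
end

section
/- Let μ be a probability measure on the unit sphere S² and for each t ≥ 0 define the frame potential F_t(μ) = ∬ (r·s)^t dμ(r) dμ(s). Then for every even positive integer t, F_t(μ) ≥ 1/(t+1). -/
/-!
Expanding `⟪r, s⟫ ^ t` in an orthonormal basis writes `F(μ, ν) = ∬ ⟪r, s⟫ ^ t dμ(r) dν(s)` as the
inner product `⟪T μ, T ν⟫` of the moment tensors `T μ = ∫ r^{⊗t} dμ(r)`, so `F` is a positive
semidefinite form on measures. If `σ` is a probability measure with `∫ ⟪r, s⟫ ^ t dσ(s) = c` for
every unit vector `r`, then `F(μ, σ) = F(σ, σ) = c`, and `0 ≤ ‖T μ - T σ‖²` gives `c ≤ F(μ, μ)`.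
The normalized surface measure on the sphere has this property; its moments follow from integrating
`⟪r, x⟫ ^ t e^{-‖x‖²}` over the whole space in two ways, in polar coordinates and, after a rotation
taking `r` to a basis vector, as a product of one-dimensional Gaussian integrals. On `S²` the
constant is `Γ((t+1)/2) Γ(3/2) / (√π Γ((t+3)/2)) = 1/(t+1)`.
-/

open MeasureTheory Set Metric Real

theorem integral_Ioi_pow_mul_exp_neg_sq (k : ℕ) :
    ∫ x in Ioi (0 : ℝ), x ^ k * exp (-x ^ 2) = Gamma ((k + 1) / 2) / 2 := by
  have h := integral_rpow_mul_exp_neg_rpow two_pos (neg_one_lt_zero.trans_le k.cast_nonneg)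
  norm_cast at h
  rw [h]
  push_cast
  ring

theorem integral_pow_mul_exp_neg_sq {t : ℕ} (ht : Even t) :
    ∫ x : ℝ, x ^ t * exp (-x ^ 2) = Gamma ((t + 1) / 2) := by
  have h := integral_comp_abs (f := fun x : ℝ ↦ x ^ t * exp (-x ^ 2))
  simp only [ht.pow_abs, sq_abs] at h
  rw [h, integral_Ioi_pow_mul_exp_neg_sq]
  ring

theorem integral_mul_fun_norm_eq_of_homogeneous {E : Type*} [NormedAddCommGroup E]
    [NormedSpace ℝ E] [FiniteDimensional ℝ E] [MeasurableSpace E] [BorelSpace E] [Nontrivial E]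
    (μ : Measure E) [μ.IsAddHaarMeasure] {f : E → ℝ} {t : ℕ}
    (hf : ∀ (c : ℝ) (x : E), 0 < c → f (c • x) = c ^ t * f x) (g : ℝ → ℝ) :
    ∫ x, f x * g ‖x‖ ∂μ =
      (∫ ω : sphere (0 : E) 1, f ω ∂μ.toSphere) *
        ∫ r in Ioi (0 : ℝ), r ^ (t + (Module.finrank ℝ E - 1)) * g r := by
  set F : sphere (0 : E) 1 × Ioi (0 : ℝ) → ℝ := fun p ↦ f p.1 * ((p.2 : ℝ) ^ t * g p.2)
  have hF : ∀ x : ({0}ᶜ : Set E), f x * g ‖(x : E)‖ = F (homeomorphUnitSphereProd E x) := by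
    intro ⟨x, hx0⟩
    have hx : ‖x‖ ≠ 0 := norm_ne_zero_iff.mpr hx0
    have hfx := hf ‖x‖ (‖x‖⁻¹ • x) (norm_pos_iff.mpr hx0)
    rw [smul_inv_smul₀ hx] at hfx
    simp only [F, homeomorphUnitSphereProd_apply_fst_coe, homeomorphUnitSphereProd_apply_snd_coe,
      hfx]
    ring
  have hμ : ∫ x, f x * g ‖x‖ ∂μ = ∫ x, f x * g ‖x‖ ∂(μ.restrict {0}ᶜ) := by
    rw [restrict_compl_singleton]
  rw [hμ, ← integral_subtype_comap (measurableSet_singleton _).compl,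
    integral_congr_ae (ae_of_all _ hF),
    μ.measurePreserving_homeomorphUnitSphereProd.integral_comp (Homeomorph.measurableEmbedding _),
    integral_prod_mul (fun ω : sphere (0 : E) 1 ↦ f ω) (fun r : Ioi (0 : ℝ) ↦ (r : ℝ) ^ t * g r)]
  congr 1
  rw [Measure.volumeIoiPow, integral_withDensity_eq_integral_toReal_smul (by fun_prop)
      (ae_of_all _ fun _ ↦ ENNReal.ofReal_lt_top),
    integral_subtype_comap measurableSet_Ioi
      (fun r : ℝ ↦ (ENNReal.ofReal (r ^ _)).toReal • (r ^ t * g r))]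
  refine setIntegral_congr_fun measurableSet_Ioi fun r hr ↦ ?_
  rw [ENNReal.toReal_ofReal (pow_pos hr _).le, smul_eq_mul, pow_add]
  ring

theorem EuclideanSpace.integral_apply_pow_mul_exp_neg_norm_sq {ι : Type*} [Fintype ι]
    (j : ι) {t : ℕ} (ht : Even t) :
    ∫ x : EuclideanSpace ℝ ι, x j ^ t * exp (-‖x‖ ^ 2) =
      Gamma ((t + 1) / 2) * √π ^ (Fintype.card ι - 1) := by
  classical
  have hprod : ∀ y : ι → ℝ,
      (WithLp.toLp 2 y : EuclideanSpace ℝ ι) j ^ t * exp (-‖WithLp.toLp 2 y‖ ^ 2) =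
        ∏ i, (if i = j then y i ^ t else 1) * exp (-y i ^ 2) := by
    intro y
    rw [EuclideanSpace.norm_sq_eq, Finset.prod_mul_distrib, ← exp_sum, Finset.prod_ite_eq']
    simp [Finset.sum_neg_distrib]
  have hfactor : ∀ i, ∫ u : ℝ, (if i = j then u ^ t else 1) * exp (-u ^ 2) =
      if i = j then Gamma ((t + 1) / 2) else √π := by
    intro i
    split_ifs
    · exact integral_pow_mul_exp_neg_sq ht
    · simpa using integral_gaussian 1
  rw [← (PiLp.volume_preserving_toLp ι).integral_comp
    (MeasurableEquiv.toLp 2 (ι → ℝ)).measurableEmbedding]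
  simp_rw [hprod]
  rw [volume_pi,
    integral_fintype_prod_eq_prod (fun i u ↦ (if i = j then u ^ t else 1) * exp (-u ^ 2))]
  simp_rw [hfactor]
  rw [← Finset.mul_prod_erase _ _ (Finset.mem_univ j), if_pos rfl,
    Finset.prod_congr rfl fun i hi ↦ if_neg (Finset.ne_of_mem_erase hi), Finset.prod_const,
    Finset.card_erase_of_mem (Finset.mem_univ j), Finset.card_univ]

section MomentTensor

variable {E : Type*} [NormedAddCommGroup E] [InnerProductSpace ℝ E]
  {ι : Type*} [Fintype ι] (b : OrthonormalBasis ι ℝ E) (t : ℕ)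

theorem inner_pow_eq_sum_prod_repr (x y : E) :
    inner ℝ x y ^ t = ∑ p : Fin t → ι, (∏ k, b.repr x (p k)) * ∏ k, b.repr y (p k) := by
  rw [← b.repr.inner_map_map, PiLp.inner_apply, Fintype.sum_pow]
  simp [← Finset.prod_mul_distrib, mul_comm]

variable [MeasurableSpace E] [BorelSpace E]

noncomputable def momentTensor (μ : Measure (sphere (0 : E) 1)) : EuclideanSpace ℝ (Fin t → ι) :=
  WithLp.toLp 2 fun p ↦ ∫ r, ∏ k, b.repr r (p k) ∂μ

variable [FiniteDimensional ℝ E]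

theorem integral_integral_inner_pow_eq_inner_momentTensor
    (μ ν : Measure (sphere (0 : E) 1)) [IsFiniteMeasure μ] [IsFiniteMeasure ν] :
    ∫ r, ∫ s, inner ℝ (r : E) s ^ t ∂ν ∂μ =
      inner ℝ (momentTensor b t μ) (momentTensor b t ν) := by
  have hint : ∀ (m : Measure (sphere (0 : E) 1)) [IsFiniteMeasure m] (p : Fin t → ι),
      Integrable (fun r : sphere (0 : E) 1 ↦ ∏ k, b.repr r (p k)) m := fun m _ p ↦
    (by fun_prop : Continuous fun r : sphere (0 : E) 1 ↦ ∏ k, b.repr r (p k))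
      |>.integrable_of_hasCompactSupport (HasCompactSupport.of_compactSpace _)
  simp_rw [inner_pow_eq_sum_prod_repr b t,
    integral_finsetSum _ fun p _ ↦ (hint ν p).const_mul _, integral_const_mul]
  rw [integral_finsetSum _ fun p _ ↦ (hint μ p).mul_const _, PiLp.inner_apply]
  simp [momentTensor, integral_mul_const, mul_comm]

end MomentTensor

section InnerProductSpace

variable {E : Type*} [NormedAddCommGroup E] [InnerProductSpace ℝ E] [FiniteDimensional ℝ E]
  [MeasurableSpace E] [BorelSpace E]

theorem le_integral_integral_inner_pow_of_forall_integral_eq (t : ℕ)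
    (μ σ : Measure (sphere (0 : E) 1)) [IsProbabilityMeasure μ] [IsProbabilityMeasure σ] {c : ℝ}
    (hσ : ∀ r : sphere (0 : E) 1, ∫ s, inner ℝ (r : E) s ^ t ∂σ = c) :
    c ≤ ∫ r, ∫ s, inner ℝ (r : E) s ^ t ∂μ ∂μ := by
  set b := stdOrthonormalBasis ℝ E
  have hcross : ∀ (ν : Measure (sphere (0 : E) 1)) [IsProbabilityMeasure ν],
      inner ℝ (momentTensor b t ν) (momentTensor b t σ) = c := fun ν _ ↦ by
    rw [← integral_integral_inner_pow_eq_inner_momentTensor]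
    simp [hσ]
  have hdist := norm_sub_sq_real (momentTensor b t μ) (momentTensor b t σ)
  rw [hcross μ, ← real_inner_self_eq_norm_sq (momentTensor b t σ), hcross σ] at hdist
  rw [integral_integral_inner_pow_eq_inner_momentTensor b, real_inner_self_eq_norm_sq]
  linarith [sq_nonneg ‖momentTensor b t μ - momentTensor b t σ‖]

theorem integral_inner_pow_mul_exp_neg_norm_sq {r : E} (hr : ‖r‖ = 1) {t : ℕ} (ht : Even t) :
    ∫ x : E, inner ℝ r x ^ t * exp (-‖x‖ ^ 2) =
      Gamma ((t + 1) / 2) * √π ^ (Module.finrank ℝ E - 1) := by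
  have hd : 0 < Module.finrank ℝ E :=
    Module.finrank_pos_iff_exists_ne_zero.mpr ⟨r, norm_ne_zero_iff.mp (by simp [hr])⟩
  let j : Fin (Module.finrank ℝ E) := ⟨0, hd⟩
  obtain ⟨b, hb⟩ := Orthonormal.exists_orthonormalBasis_extension_of_card_eq (𝕜 := ℝ)
    (v := fun _ ↦ r) (s := {j}) (by simp) (orthonormal_subsingleton_iff.mpr fun _ ↦ hr)
  calc ∫ x : E, inner ℝ r x ^ t * exp (-‖x‖ ^ 2)
      = ∫ x : E, b.repr x j ^ t * exp (-‖b.repr x‖ ^ 2) := by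
        simp only [b.repr_apply_apply, hb j rfl, LinearIsometryEquiv.norm_map]
    _ = ∫ y : EuclideanSpace ℝ (Fin (Module.finrank ℝ E)), y j ^ t * exp (-‖y‖ ^ 2) :=
        b.measurePreserving_repr.integral_comp b.repr.toHomeomorph.measurableEmbedding
          fun y ↦ y j ^ t * exp (-‖y‖ ^ 2)
    _ = _ := by rw [EuclideanSpace.integral_apply_pow_mul_exp_neg_norm_sq j ht, Fintype.card_fin]

theorem integral_toSphere_inner_pow {r : E} (hr : ‖r‖ = 1) {t : ℕ} (ht : Even t) :
    ∫ ω : sphere (0 : E) 1, inner ℝ r (ω : E) ^ t ∂(volume : Measure E).toSphere =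
      2 * Gamma ((t + 1) / 2) * √π ^ (Module.finrank ℝ E - 1) /
        Gamma ((t + Module.finrank ℝ E) / 2) := by
  have : Nontrivial E := nontrivial_of_ne r 0 (norm_ne_zero_iff.mp (by simp [hr]))
  have hd : 0 < Module.finrank ℝ E := Module.finrank_pos
  have hpolar := integral_mul_fun_norm_eq_of_homogeneous volume
    (f := fun x : E ↦ inner ℝ r x ^ t) (t := t) (fun c x _ ↦ by simp [inner_smul_right, mul_pow])
    fun ρ ↦ exp (-ρ ^ 2)
  rw [integral_inner_pow_mul_exp_neg_norm_sq hr ht, integral_Ioi_pow_mul_exp_neg_sq] at hpolar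
  have hΓ : 0 < Gamma ((t + Module.finrank ℝ E) / 2) := Gamma_pos_of_pos (by positivity)
  push_cast [Nat.cast_sub hd] at hpolar
  rw [show (t : ℝ) + (Module.finrank ℝ E - 1) + 1 = t + Module.finrank ℝ E by ring] at hpolar
  field_simp
  linarith

variable (E) in
noncomputable def uniformSphere : Measure (sphere (0 : E) 1) :=
  ((volume : Measure E).toSphere univ)⁻¹ • (volume : Measure E).toSphere

instance [Nontrivial E] : IsProbabilityMeasure (uniformSphere E) :=
  have : NeZero (volume : Measure E).toSphere := ⟨Measure.toSphere_ne_zero _⟩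
  isProbabilityMeasureSMul

theorem integral_uniformSphere_inner_pow {r : E} (hr : ‖r‖ = 1) {t : ℕ} (ht : Even t) :
    ∫ ω, inner ℝ r (ω : E) ^ t ∂uniformSphere E =
      Gamma ((t + 1) / 2) * Gamma (Module.finrank ℝ E / 2) /
        (√π * Gamma ((t + Module.finrank ℝ E) / 2)) := by
  have : Nontrivial E := nontrivial_of_ne r 0 (norm_ne_zero_iff.mp (by simp [hr]))
  have hd : (0 : ℝ) < Module.finrank ℝ E := Nat.cast_pos.mpr Module.finrank_pos
  have hΓ : Gamma (Module.finrank ℝ E / 2) ≠ 0 := (Gamma_pos_of_pos (by positivity)).ne'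
  have hπ : √π ≠ 0 := (sqrt_pos.mpr pi_pos).ne'
  -- the total mass of `toSphere` is its moment of order `0`
  have hvol := integral_toSphere_inner_pow hr Even.zero
  simp only [pow_zero, integral_const, smul_eq_mul, mul_one, CharP.cast_eq_zero, zero_add] at hvol
  rw [uniformSphere, integral_smul_measure, ENNReal.toReal_inv, ← measureReal_def, hvol,
    integral_toSphere_inner_pow hr ht, Gamma_one_half_eq, smul_eq_mul]
  field_simp

end InnerProductSpace

theorem stmt_17_general
    (μ : Measure (Metric.sphere (0 : EuclideanSpace ℝ (Fin 3)) 1))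
    [IsProbabilityMeasure μ] (t : ℕ) (ht : Even t) :
    (1 : ℝ) / (t + 1) ≤
      ∫ r, ∫ s,
        (inner ℝ (r : EuclideanSpace ℝ (Fin 3)) (s : EuclideanSpace ℝ (Fin 3)) : ℝ) ^ t
        ∂μ ∂μ := by
  refine le_integral_integral_inner_pow_of_forall_integral_eq t μ (uniformSphere _) fun r ↦ ?_
  rw [integral_uniformSphere_inner_pow (norm_eq_of_mem_sphere r) ht, finrank_euclideanSpace_fin,
    show ((3 : ℕ) : ℝ) / 2 = 1 / 2 + 1 by norm_num,
    show ((t : ℝ) + (3 : ℕ)) / 2 = (t + 1) / 2 + 1 by push_cast; ring,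
    Gamma_add_one (by positivity : ((t : ℝ) + 1) / 2 ≠ 0), Gamma_add_one one_half_pos.ne',
    Gamma_one_half_eq]
  have hΓ : Gamma ((t + 1) / 2) ≠ 0 := (Gamma_pos_of_pos (by positivity)).ne'
  have hπ : √π ≠ 0 := (sqrt_pos.mpr pi_pos).ne'
  field_simp

theorem stmt_17
    (μ : Measure (Metric.sphere (0 : EuclideanSpace ℝ (Fin 3)) 1))
    [IsProbabilityMeasure μ] (t : ℕ) (ht : Even t) (ht0 : 0 < t) :
    (1 : ℝ) / (t + 1) ≤
      ∫ r, ∫ s,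
        (inner ℝ (r : EuclideanSpace ℝ (Fin 3)) (s : EuclideanSpace ℝ (Fin 3)) : ℝ) ^ t
        ∂μ ∂μ :=
  stmt_17_general μ t ht
end
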